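/- arXiv:2412.05344 — 8 statements merged into one kernel-verified Lean document; each statement's English description precedes it below -/
import Mathlib

section
/- Let X be a finite set and p : X × X × 𝒳 × 𝒳 → ℝ (where 𝒳 is the set of nonempty subsets of X) with Möbius inverse q defined by q(x,y,A,B) = Σ_{A ⊆ A'} Σ_{B ⊆ B'} (-1)^{|A'\A|+|B'\B|} p(x,y,A',B'). If q(x,y,A,B) ≥ 0 for all (x,y) ∈ A × B, then p satisfies regularity: whenever A ⊆ A' and B ⊆ B' and (x,y) ∈ A × B, we have p(x,y,A,B) ≥ p(x,y,A',B'). -/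
/-!
`mob2 p x y` is the Möbius transform of `p x y` on the lattice of pairs of supersets, taken one
coordinate at a time. Möbius inversion recovers `p x y A B` as the sum of `mob2 p x y C D` over
all `A ⊆ C`, `B ⊆ D`. Enlarging `A` and `B` only removes terms from this sum, and each removed
term has `x ∈ C`, `y ∈ D`, hence is nonnegative.
-/

open Finset

/-- The Möbius inverse of `p` in the two menu coordinates. -/
noncomputable def mob2 {X : Type*} [Fintype X] [DecidableEq X]
    (p : X → X → Finset X → Finset X → ℝ) (x y : X) (A B : Finset X) : ℝ :=
  ∑ A' ∈ Finset.univ.filter (fun A' => A ⊆ A'),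
    ∑ B' ∈ Finset.univ.filter (fun B' => B ⊆ B'),
      (-1 : ℝ) ^ ((A' \ A).card + (B' \ B).card) * p x y A' B'

theorem Finset.sum_Icc_neg_one_pow_card_sdiff {X R : Type*} [DecidableEq X] [Ring R]
    {A C : Finset X} (h : A ⊆ C) :
    ∑ B ∈ Icc A C, (-1 : R) ^ #(C \ B) = if A = C then 1 else 0 := by
  have hcompl : ∑ B ∈ Icc A C, (-1 : R) ^ #(C \ B) = ∑ D ∈ (C \ A).powerset, (-1 : R) ^ #D :=
    sum_nbij' (C \ ·) (C \ ·)
      (fun B hB => mem_powerset.2 (sdiff_subset_sdiff Subset.rfl (mem_Icc.1 hB).1))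
      (fun D hD => mem_Icc.2 ⟨subset_sdiff.2 ⟨h, (subset_sdiff.1 (mem_powerset.1 hD)).2.symm⟩,
        sdiff_subset⟩)
      (fun B hB => sdiff_sdiff_eq_self (mem_Icc.1 hB).2)
      (fun D hD => sdiff_sdiff_eq_self ((mem_powerset.1 hD).trans sdiff_subset))
      fun _ _ => rfl
  have hsum := congrArg (Int.cast : ℤ → R) (sum_powerset_neg_one_pow_card (x := C \ A))
  push_cast at hsum
  simp only [hcompl, hsum, sdiff_eq_empty_iff_subset, Subset.antisymm_iff (s₁ := A), h, true_and]

section UpperMoebius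

variable {X R : Type*} [Fintype X] [DecidableEq X] [Ring R]

def upperMoebius (f : Finset X → R) (A : Finset X) : R :=
  ∑ B ∈ Ici A, (-1) ^ #(B \ A) * f B

theorem sum_Ici_upperMoebius (f : Finset X → R) (A : Finset X) :
    ∑ B ∈ Ici A, upperMoebius f B = f A :=
  calc ∑ B ∈ Ici A, upperMoebius f B
      = ∑ C ∈ Ici A, (∑ B ∈ Icc A C, (-1 : R) ^ #(C \ B)) * f C := by
        simp only [upperMoebius, sum_mul]
        exact sum_comm' fun B C => by simp only [mem_Ici, mem_Icc]; grind
    _ = f A := by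
        rw [sum_congr rfl fun C hC => by rw [sum_Icc_neg_one_pow_card_sdiff (mem_Ici.1 hC)]]
        simp

theorem sum_upperMoebius {ι : Type*} (s : Finset ι) (f : ι → Finset X → R) (A : Finset X) :
    ∑ i ∈ s, upperMoebius (f i) A = upperMoebius (fun B => ∑ i ∈ s, f i B) A := by
  simp only [upperMoebius, mul_sum]
  exact sum_comm

end UpperMoebius

section Mob2

variable {X : Type*} [Fintype X] [DecidableEq X]

theorem mob2_eq_upperMoebius (p : X → X → Finset X → Finset X → ℝ) (x y : X) (A B : Finset X) :
    mob2 p x y A B = upperMoebius (fun A' => upperMoebius (p x y A') B) A := by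
  simp only [mob2, upperMoebius, filter_le_eq_Ici, mul_sum, pow_add, mul_assoc]

theorem sum_Ici_mob2 (p : X → X → Finset X → Finset X → ℝ) (x y : X) (A B : Finset X) :
    ∑ z ∈ Ici (A, B), mob2 p x y z.1 z.2 = p x y A B := by
  simp only [← Ici_product_Ici, sum_product, mob2_eq_upperMoebius, sum_upperMoebius,
    sum_Ici_upperMoebius]

end Mob2

/-- If the Möbius inverse `q` of `p` is nonnegative (complete monotonicity), then `p`
satisfies regularity: `p(x,y,A,B) ≥ p(x,y,A',B')` whenever `A ⊆ A'`, `B ⊆ B'`. -/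
theorem stmt1 {X : Type*} [Fintype X] [DecidableEq X]
    (p : X → X → Finset X → Finset X → ℝ)
    (hq : ∀ (A B : Finset X), ∀ x ∈ A, ∀ y ∈ B, 0 ≤ mob2 p x y A B) :
    ∀ (A A' B B' : Finset X), A ⊆ A' → B ⊆ B' → ∀ x ∈ A, ∀ y ∈ B,
      p x y A' B' ≤ p x y A B := by
  intro A A' B B' hA hB x hx y hy
  rw [← sum_Ici_mob2 p x y A B, ← sum_Ici_mob2 p x y A' B']
  refine sum_le_sum_of_subset_of_nonneg (Ici_subset_Ici.2 ⟨hA, hB⟩) fun z hz _ => ?_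
  obtain ⟨hzA, hzB⟩ := mem_Ici.1 hz
  exact hq z.1 z.2 x (hzA hx) y (hzB hy)
end

section
/- A random joint choice rule p satisfies marginality (for all A, B, C and all x ∈ A, Σ_{y∈B} p(x,y,A,B) = Σ_{y∈C} p(x,y,A,C)) if and only if its Möbius inverse q satisfies: for every nonempty A ⊆ X, every proper nonempty subset B ⊊ X, and every x ∈ A, Σ_{y∈B} q(x,y,A,B) = Σ_{z∉B} q(x,z,A,B∪{z}). -/
/-!
Fix `x` and put `f A B = ∑_{y ∈ B} p x y A B`. Write `M g B = ∑_{D ⊇ B} (-1)^|D \ B| g D` for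
the Möbius transform towards the top, so that `q` is `M` applied in both menus. Applying `M` to
`D ↦ ∑_{y ∈ D} r y D` and regrouping the terms with `y ∉ B` by `y` gives
`∑_{y ∈ B} M (r y) B - ∑_{z ∉ B} M (r z) (B ∪ {z})`; hence the recursion for `q` at `(A, B)` says
exactly that the two-menu transform of `f` vanishes at `(A, B)`. On an up-closed family of menus
(here `{A | x ∈ A}` and `{B | B ≠ ∅}`) `M` is invertible, and `M g` vanishes on the family except
at `univ` exactly when `g` is constant on it. So the recursion holds iff `f A ·` is constant on
nonempty menus whenever `x ∈ A`, which is marginality.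
-/

open Finset

section SignSums

variable {X R : Type*} [DecidableEq X] [CommRing R] {B C : Finset X}

theorem sum_Icc_neg_one_pow_card_sdiff_left (h : B ⊆ C) :
    ∑ D ∈ Icc B C, (-1 : R) ^ #(D \ B) = if B = C then 1 else 0 := by
  rw [Icc_eq_image_powerset h, sum_image fun T hT T' hT' hTT' => by
    have hdiff : (B ∪ T) \ B = (B ∪ T') \ B := by rw [hTT']
    rwa [union_sdiff_cancel_left (disjoint_sdiff.mono_right (mem_powerset.1 hT)),
      union_sdiff_cancel_left (disjoint_sdiff.mono_right (mem_powerset.1 hT'))] at hdiff]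
  have hsum : ∑ T ∈ (C \ B).powerset, (-1 : R) ^ #((B ∪ T) \ B) =
      ((∑ T ∈ (C \ B).powerset, (-1 : ℤ) ^ #T : ℤ) : R) := by
    push_cast
    exact sum_congr rfl fun T hT => by
      rw [union_sdiff_cancel_left (disjoint_sdiff.mono_right (mem_powerset.1 hT))]
  have hBC : C \ B = ∅ ↔ B = C :=
    sdiff_eq_empty_iff_subset.trans ⟨fun hCB => Subset.antisymm h hCB, fun e => e ▸ Subset.rfl⟩
  rw [hsum, sum_powerset_neg_one_pow_card]
  simp only [hBC]
  split_ifs <;> simp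

theorem sum_Icc_neg_one_pow_card_sdiff_right (h : B ⊆ C) :
    ∑ D ∈ Icc B C, (-1 : R) ^ #(C \ D) = if B = C then 1 else 0 := by
  have hsign : ∀ D ∈ Icc B C, (-1 : R) ^ #(C \ D) = (-1) ^ #(C \ B) * (-1) ^ #(D \ B) := by
    intro D hD
    obtain ⟨hBD, hDC⟩ := mem_Icc.1 hD
    have hcard : #(C \ B) = #(C \ D) + #(D \ B) := by
      rw [card_sdiff_of_subset h, card_sdiff_of_subset hDC, card_sdiff_of_subset hBD]
      have := card_le_card hBD
      have := card_le_card hDC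
      omega
    rw [hcard, pow_add, mul_assoc, ← pow_add, ← two_mul, pow_mul, neg_one_sq, one_pow, mul_one]
  rw [sum_congr rfl hsign, ← mul_sum, sum_Icc_neg_one_pow_card_sdiff_left h]
  split_ifs with hBC
  · simp [hBC]
  · rw [mul_zero]

end SignSums

section UpperMobius

variable {X R : Type*} [Fintype X] [DecidableEq X] [CommRing R]

def upperMobius (g : Finset X → R) (B : Finset X) : R :=
  ∑ D ∈ univ.filter (B ⊆ ·), (-1) ^ #(D \ B) * g D

theorem filter_superset_eq_Icc (B : Finset X) : univ.filter (B ⊆ ·) = Icc B univ := by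
  ext D
  simp

theorem upperMobius_univ (g : Finset X → R) : upperMobius g univ = g univ := by
  simp [upperMobius, univ_subset_iff, filter_eq']

theorem upperMobius_sum {ι : Type*} (s : Finset ι) (g : ι → Finset X → R) (B : Finset X) :
    upperMobius (fun D => ∑ i ∈ s, g i D) B = ∑ i ∈ s, upperMobius (g i) B := by
  simp only [upperMobius, mul_sum]
  exact sum_comm

theorem sum_upperMobius (g : Finset X → R) (B : Finset X) :
    ∑ D ∈ univ.filter (B ⊆ ·), upperMobius g D = g B := by
  simp only [upperMobius]
  rw [sum_comm' (t' := univ.filter (B ⊆ ·)) (s' := fun E => Icc B E) fun D E => by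
    simp only [mem_filter, mem_univ, true_and, mem_Icc]
    exact ⟨fun ⟨hBD, hDE⟩ => ⟨⟨hBD, hDE⟩, hBD.trans hDE⟩, fun ⟨hBDE, _⟩ => hBDE⟩]
  simp_rw [← sum_mul]
  rw [sum_congr rfl fun E hE => by
    rw [sum_Icc_neg_one_pow_card_sdiff_right (mem_filter.1 hE).2, ite_mul, one_mul, zero_mul]]
  simp

variable {S : Set (Finset X)} {g h : Finset X → R}

theorem eqOn_upperMobius_iff (hS : IsUpperSet S) :
    S.EqOn (upperMobius g) (upperMobius h) ↔ S.EqOn g h := by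
  constructor
  · intro hgh B hB
    rw [← sum_upperMobius g, ← sum_upperMobius h]
    exact sum_congr rfl fun D hD => hgh (hS (mem_filter.1 hD).2 hB)
  · intro hgh B hB
    exact sum_congr rfl fun D hD => by rw [hgh (hS (mem_filter.1 hD).2 hB)]

theorem forall_upperMobius_eq_zero_iff (hS : IsUpperSet S) :
    (∀ D ∈ S, D ≠ univ → upperMobius g D = 0) ↔ ∀ D ∈ S, g D = g univ := by
  constructor
  · intro hg D hD
    rw [← sum_upperMobius g, sum_eq_single univ, upperMobius_univ]
    · exact fun E hE hEu => hg E (hS (mem_filter.1 hE).2 hD) hEu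
    · simp
  · intro hg D hD hDu
    rw [upperMobius, sum_congr rfl fun E hE => by rw [hg E (hS (mem_filter.1 hE).2 hD)],
      ← sum_mul, filter_superset_eq_Icc, sum_Icc_neg_one_pow_card_sdiff_left (subset_univ D),
      if_neg hDu, zero_mul]

theorem upperMobius_sum_mem (r : X → Finset X → R) (B : Finset X) :
    upperMobius (fun D => ∑ y ∈ D, r y D) B =
      ∑ y ∈ B, upperMobius (r y) B - ∑ z ∈ Bᶜ, upperMobius (r z) (insert z B) := by
  set T := ∑ D ∈ univ.filter (B ⊆ ·), ∑ z ∈ D \ B, (-1 : R) ^ #(D \ B) * r z D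
  have hsplit : upperMobius (fun D => ∑ y ∈ D, r y D) B = ∑ y ∈ B, upperMobius (r y) B + T := by
    rw [← upperMobius_sum, upperMobius, upperMobius, ← sum_add_distrib]
    refine sum_congr rfl fun D hD => ?_
    rw [← mul_sum, ← mul_add, add_comm, sum_sdiff (mem_filter.1 hD).2]
  have hext : ∑ z ∈ Bᶜ, upperMobius (r z) (insert z B) = -T := by
    simp only [upperMobius, T]
    rw [sum_comm' (t' := univ.filter (B ⊆ ·)) (s' := fun D => D \ B) fun z D => by
      simp only [mem_compl, mem_filter, mem_univ, true_and, mem_sdiff, insert_subset_iff]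
      tauto, ← sum_neg_distrib]
    refine sum_congr rfl fun D _ => ?_
    rw [← sum_neg_distrib]
    refine sum_congr rfl fun z hz => ?_
    rw [← card_erase_add_one hz, ← sdiff_insert, pow_succ]
    ring
  rw [hsplit, hext]
  ring

end UpperMobius

theorem mob2_eq_upperMobius {X : Type*} [Fintype X] [DecidableEq X]
    (p : X → X → Finset X → Finset X → ℝ) (x y : X) (A B : Finset X) :
    mob2 p x y A B = upperMobius (fun D => upperMobius (fun A' => p x y A' D) A) B := by
  rw [mob2, sum_comm]
  simp only [upperMobius, mul_sum]
  refine sum_congr rfl fun D _ => sum_congr rfl fun A' _ => ?_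
  rw [pow_add]
  ring

theorem sum_mob2_sub_sum_mob2_insert {X : Type*} [Fintype X] [DecidableEq X]
    (p : X → X → Finset X → Finset X → ℝ) (x : X) (A B : Finset X) :
    ∑ y ∈ B, mob2 p x y A B - ∑ z ∈ Bᶜ, mob2 p x z A (insert z B) =
      upperMobius (fun D => upperMobius (fun A' => ∑ y ∈ D, p x y A' D) A) B := by
  simp only [upperMobius_sum, upperMobius_sum_mem, mob2_eq_upperMobius]

theorem stmt3_general {X : Type*} [Fintype X] [DecidableEq X]
    (p : X → X → Finset X → Finset X → ℝ) :
    (∀ (A B C : Finset X), B.Nonempty → C.Nonempty → ∀ x ∈ A,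
        ∑ y ∈ B, p x y A B = ∑ y ∈ C, p x y A C) ↔
    (∀ (A B : Finset X), A.Nonempty → B.Nonempty → B ≠ Finset.univ → ∀ x ∈ A,
        ∑ y ∈ B, mob2 p x y A B = ∑ z ∈ Bᶜ, mob2 p x z A (insert z B)) := by
  have hmem : ∀ x : X, IsUpperSet {A : Finset X | x ∈ A} := fun _ _ _ hAA' hA => hAA' hA
  have hne : IsUpperSet {B : Finset X | B.Nonempty} := fun _ _ hBB' hB => hB.mono hBB'
  constructor
  · intro hmarg A B _ hB hBu x hx
    rw [← sub_eq_zero, sum_mob2_sub_sum_mob2_insert]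
    refine (forall_upperMobius_eq_zero_iff hne).2 (fun D hD => ?_) B hB hBu
    exact (eqOn_upperMobius_iff (hmem x)).2
      (fun A' hA' => hmarg A' D univ hD (hD.mono (subset_univ D)) x hA') hx
  · intro hrec A B C hB hC x hx
    have hconst : ∀ D : Finset X, D.Nonempty → ∑ y ∈ D, p x y A D = ∑ y, p x y A univ :=
      fun D hD => (eqOn_upperMobius_iff (hmem x)).1 (fun A' hA' =>
        (forall_upperMobius_eq_zero_iff hne).1 (fun E hE hEu => by
          rw [← sum_mob2_sub_sum_mob2_insert, sub_eq_zero]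
          exact hrec A' E ⟨x, hA'⟩ hE hEu x hA') D hD) hx
    rw [hconst B hB, hconst C hC]

/-- A random joint choice rule satisfies marginality iff its Möbius inverse satisfies the
recursion `Σ_{y∈B} q(x,y,A,B) = Σ_{z∉B} q(x,z,A,B∪{z})` for proper nonempty `B ⊊ X`. -/
theorem stmt3 {X : Type*} [Fintype X] [DecidableEq X]
    (p : X → X → Finset X → Finset X → ℝ)
    (hnn : ∀ (A B : Finset X), ∀ x ∈ A, ∀ y ∈ B, 0 ≤ p x y A B)
    (hsum : ∀ (A B : Finset X), A.Nonempty → B.Nonempty →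
      ∑ x ∈ A, ∑ y ∈ B, p x y A B = 1) :
    (∀ (A B C : Finset X), B.Nonempty → C.Nonempty → ∀ x ∈ A,
        ∑ y ∈ B, p x y A B = ∑ y ∈ C, p x y A C) ↔
    (∀ (A B : Finset X), A.Nonempty → B.Nonempty → B ≠ Finset.univ → ∀ x ∈ A,
        ∑ y ∈ B, mob2 p x y A B = ∑ z ∈ Bᶜ, mob2 p x z A (insert z B)) :=
  stmt3_general p
end

section
/- If a random joint choice rule p is consistent with SI-CDRUM (CDRUM with a state independent transition function), then p satisfies choice set independence: for each y ∈ B ⊆ X and each pair (x,A), (x,A') with p(x,A) > 0 and p(x,A') > 0, p(x,y,A,B)/p(x,A) = p(x,y,A',B)/p(x,A'). -/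
/-!
With a state independent transition `t x`, the representation factors as
`p(x,y,A,B) = ν(N(x,A)) · t x (N(y,B))`. Since every preference has exactly one top element,
the sets `N(w,X)` partition the preferences, so summing over `w` gives `p(x,A) = ν(N(x,A))`
and the ratio `p(x,y,A,B) / p(x,A) = t x (N(y,B))` no longer involves `A`.
-/

open Finset

/-- Preferences (linear orders) on `X`, encoded as rank functions: `x ≻ y` iff `σ x < σ y`. -/
abbrev Pref (X : Type*) [Fintype X] : Type _ := X ≃ Fin (Fintype.card X)

/-- `N(x,A)`: the set of linear orders maximized by `x` on `A`. -/
def Npref {X : Type*} [Fintype X] [DecidableEq X] (x : X) (A : Finset X) :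
    Finset (Pref X) :=
  Finset.univ.filter (fun σ => ∀ a ∈ A, a ≠ x → σ x < σ a)

/-- `I(x,A)`: the set of linear orders ranking `X \ A` above `x` and `x` above `A \ {x}`. -/
def Ipref {X : Type*} [Fintype X] [DecidableEq X] (x : X) (A : Finset X) :
    Finset (Pref X) :=
  Finset.univ.filter (fun σ => (∀ z, z ∉ A → σ z < σ x) ∧ ∀ a ∈ A, a ≠ x → σ x < σ a)

/-- `ν` is a probability distribution over preferences. -/
def IsDist {X : Type*} [Fintype X] [DecidableEq X] (ν : Pref X → ℝ) : Prop :=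
  (∀ σ, 0 ≤ ν σ) ∧ ∑ σ, ν σ = 1

/-- `t` is a transition function: for each choice and preference, a distribution over
next-period preferences; `t x σ σ'` is the weight on `σ'` given input `(x, σ)`. -/
def IsTransition {X : Type*} [Fintype X] [DecidableEq X]
    (t : X → Pref X → Pref X → ℝ) : Prop :=
  (∀ x σ σ', 0 ≤ t x σ σ') ∧ ∀ x σ, ∑ σ', t x σ σ' = 1

/-- `(ν, t)` is a consumption dependent random utility representation of `p`. -/
def IsCDRUMRep {X : Type*} [Fintype X] [DecidableEq X]
    (p : X → X → Finset X → Finset X → ℝ) (ν : Pref X → ℝ)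
    (t : X → Pref X → Pref X → ℝ) : Prop :=
  ∀ (A B : Finset X), ∀ x ∈ A, ∀ y ∈ B,
    p x y A B = ∑ σ ∈ Npref x A, ∑ σ' ∈ Npref y B, ν σ * t x σ σ'

section Npref

variable {X : Type*} [Fintype X] [DecidableEq X]

theorem Npref_univ_eq_filter [NeZero (Fintype.card X)] (w : X) :
    Npref w univ = univ.filter (fun σ : Pref X => σ.symm 0 = w) := by
  ext σ
  simp only [Npref, mem_univ, true_implies, mem_filter, true_and, Equiv.symm_apply_eq]
  constructor
  · intro hmin
    by_contra hw
    have := hmin (σ.symm 0) fun h => hw (by rw [← h, Equiv.apply_symm_apply])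
    simp at this
  · intro hw a ha
    rw [← hw, Fin.pos_iff_ne_zero, hw]
    exact σ.injective.ne ha

theorem sum_sum_Npref_univ [Nonempty X] {M : Type*} [AddCommMonoid M] (f : Pref X → M) :
    ∑ w, ∑ σ ∈ Npref w univ, f σ = ∑ σ, f σ := by
  have : NeZero (Fintype.card X) := ⟨Fintype.card_ne_zero⟩
  simp_rw [Npref_univ_eq_filter]
  exact sum_fiberwise univ _ f

section StateIndependent

variable {p : X → X → Finset X → Finset X → ℝ} {ν : Pref X → ℝ}
  {t : X → Pref X → Pref X → ℝ}

theorem IsCDRUMRep.eq_mul_of_stateIndependent (hrep : IsCDRUMRep p ν t)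
    (hsi : ∀ x σ σ', t x σ = t x σ') (σ₀ : Pref X) {A B : Finset X} {x y : X}
    (hx : x ∈ A) (hy : y ∈ B) :
    p x y A B = (∑ σ ∈ Npref x A, ν σ) * ∑ σ' ∈ Npref y B, t x σ₀ σ' := by
  rw [hrep A B x hx y hy, sum_mul_sum]
  exact sum_congr rfl fun σ _ => by rw [hsi x σ σ₀]

theorem IsCDRUMRep.sum_univ_of_stateIndependent (hrep : IsCDRUMRep p ν t)
    (htr : IsTransition t) (hsi : ∀ x σ σ', t x σ = t x σ') {A : Finset X} {x : X}
    (hx : x ∈ A) :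
    ∑ w, p x w A univ = ∑ σ ∈ Npref x A, ν σ := by
  have : Nonempty X := ⟨x⟩
  let σ₀ : Pref X := Fintype.equivFin X
  simp_rw [hrep.eq_mul_of_stateIndependent hsi σ₀ hx (mem_univ _)]
  rw [← mul_sum, sum_sum_Npref_univ, htr.2, mul_one]

end StateIndependent

end Npref

/-- SI-CDRUM (CDRUM with a state independent transition function, `t x σ = t x σ'`)
implies choice set independence: the second-period conditional choice frequencies
`p(x,y,A,B)/p(x,A)` do not depend on the first-period menu `A`, where
`p(x,A) := Σ_{y∈X} p(x,y,A,X)`. -/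
theorem stmt9 {X : Type*} [Fintype X] [DecidableEq X]
    (p : X → X → Finset X → Finset X → ℝ)
    (h : ∃ ν : Pref X → ℝ, ∃ t : X → Pref X → Pref X → ℝ,
      IsDist ν ∧ IsTransition t ∧
      (∀ x σ σ', t x σ = t x σ') ∧ IsCDRUMRep p ν t) :
    ∀ (B : Finset X), ∀ y ∈ B, ∀ (A A' : Finset X), ∀ x, x ∈ A → x ∈ A' →
      0 < ∑ w ∈ Finset.univ, p x w A Finset.univ →
      0 < ∑ w ∈ Finset.univ, p x w A' Finset.univ →
      p x y A B / (∑ w ∈ Finset.univ, p x w A Finset.univ) =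
        p x y A' B / (∑ w ∈ Finset.univ, p x w A' Finset.univ) := by
  obtain ⟨ν, t, -, htr, hsi, hrep⟩ := h
  intro B y hy A A' x hxA hxA' hpos hpos'
  let σ₀ : Pref X := Fintype.equivFin X
  rw [hrep.sum_univ_of_stateIndependent htr hsi hxA] at hpos ⊢
  rw [hrep.sum_univ_of_stateIndependent htr hsi hxA'] at hpos' ⊢
  rw [hrep.eq_mul_of_stateIndependent hsi σ₀ hxA hy,
    hrep.eq_mul_of_stateIndependent hsi σ₀ hxA' hy, mul_div_cancel_left₀ _ hpos.ne',
    mul_div_cancel_left₀ _ hpos'.ne']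
end

section
/- Suppose a random joint choice rule p satisfies complete monotonicity, marginality, and choice set independence. Then for each y ∈ B ⊆ X and each pair of histories (x,A), (x,A') with q(x,A) > 0 and q(x,A') > 0 (where q(x,A) = Σ_{y∈X} q(x,y,A,X)), one has q(x,y,A,B)/q(x,A) = q(x,y,A',B)/q(x,A'). -/
/-!
Choice set independence and marginality make the joint choice rule factor as
`p(x,y,C,D) = p(x,C) · p(x,y,{x},D)` for `x ∈ C`, `y ∈ D` (when `p(x,C) = 0`, marginality and
nonnegativity force `p(x,·,C,D) = 0`). The two-coordinate Möbius inverse of a product is the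
product of the one-coordinate Möbius inverses, so `q(x,y,A,B) = q(x,A) · r(y,B)` with `r` the
Möbius inverse of `p(x,y,{x},·)`, and the ratio `q(x,y,A,B) / q(x,A) = r(y,B)` does not
depend on `A`.
-/

open Finset

section

variable {X : Type*} [Fintype X]

def Marginal (p : X → X → Finset X → Finset X → ℝ) : Prop :=
  ∀ (A B C : Finset X), B.Nonempty → C.Nonempty → ∀ x ∈ A,
    ∑ y ∈ B, p x y A B = ∑ y ∈ C, p x y A C

def ChoiceSetIndependent (p : X → X → Finset X → Finset X → ℝ) : Prop :=
  ∀ (B : Finset X), ∀ y ∈ B, ∀ (A A' : Finset X), ∀ x, x ∈ A → x ∈ A' →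
    0 < ∑ w, p x w A univ → 0 < ∑ w, p x w A' univ →
    p x y A B / (∑ w, p x w A univ) = p x y A' B / (∑ w, p x w A' univ)

theorem apply_eq_sum_univ_mul_apply_singleton {p : X → X → Finset X → Finset X → ℝ}
    (hnn : ∀ (A B : Finset X), ∀ x ∈ A, ∀ y ∈ B, 0 ≤ p x y A B)
    (hmarg : Marginal p) (hcsi : ChoiceSetIndependent p) {x y : X}
    (hone : ∑ w, p x w {x} univ = 1) {C D : Finset X} (hxC : x ∈ C) (hyD : y ∈ D) :
    p x y C D = (∑ w, p x w C univ) * p x y {x} D := by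
  rcases (sum_nonneg fun w _ => hnn C univ x hxC w (mem_univ w)).lt_or_eq with hpos | hzero
  · have h := hcsi D y hyD C {x} x hxC (mem_singleton_self x) hpos (by rw [hone]; exact one_pos)
    rw [hone, div_one, div_eq_iff hpos.ne'] at h
    rw [h, mul_comm]
  · have hzero_D : ∑ y' ∈ D, p x y' C D = 0 := by
      rw [hmarg C D univ ⟨y, hyD⟩ ⟨x, mem_univ x⟩ x hxC, ← hzero]
    rw [(sum_eq_zero_iff_of_nonneg fun y' hy' => hnn C D x hxC y' hy').mp hzero_D y hyD,
      ← hzero, zero_mul]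

section

variable [DecidableEq X]

noncomputable def mob1 (f : Finset X → ℝ) (A : Finset X) : ℝ :=
  ∑ A' ∈ univ.filter (A ⊆ ·), (-1 : ℝ) ^ (A' \ A).card * f A'

theorem mob2_eq_mob1_mul_mob1 (p : X → X → Finset X → Finset X → ℝ) {x y : X}
    {A B : Finset X} {f g : Finset X → ℝ}
    (h : ∀ A' B', A ⊆ A' → B ⊆ B' → p x y A' B' = f A' * g B') :
    mob2 p x y A B = mob1 f A * mob1 g B := by
  rw [mob1, mob1, sum_mul_sum, mob2]
  refine sum_congr rfl fun A' hA' => sum_congr rfl fun B' hB' => ?_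
  rw [h A' B' (mem_filter.mp hA').2 (mem_filter.mp hB').2, pow_add]
  ring

theorem sum_mob2_univ (p : X → X → Finset X → Finset X → ℝ) (x : X) (A : Finset X) :
    ∑ w, mob2 p x w A univ = mob1 (fun A' => ∑ w, p x w A' univ) A := by
  have h_supsets_univ : univ.filter (fun B' : Finset X => univ ⊆ B') = {univ} := by
    ext; simp [univ_subset_iff]
  simp only [mob2, mob1, h_supsets_univ, sum_singleton, sdiff_self, mul_sum]
  exact sum_comm

theorem mob2_eq_sum_mob2_univ_mul {p : X → X → Finset X → Finset X → ℝ}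
    (hnn : ∀ (A B : Finset X), ∀ x ∈ A, ∀ y ∈ B, 0 ≤ p x y A B)
    (hsum : ∀ (A B : Finset X), A.Nonempty → B.Nonempty → ∑ x ∈ A, ∑ y ∈ B, p x y A B = 1)
    (hmarg : Marginal p) (hcsi : ChoiceSetIndependent p) {x y : X} {A B : Finset X}
    (hxA : x ∈ A) (hyB : y ∈ B) :
    mob2 p x y A B = (∑ w, mob2 p x w A univ) * mob1 (p x y {x}) B := by
  have hone : ∑ w, p x w {x} univ = 1 := by
    simpa using hsum {x} univ (singleton_nonempty x) ⟨x, mem_univ x⟩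
  rw [sum_mob2_univ]
  exact mob2_eq_mob1_mul_mob1 p fun A' B' hA hB =>
    apply_eq_sum_univ_mul_apply_singleton hnn hmarg hcsi hone (hA hxA) (hB hyB)

end

end

theorem stmt10_general {X : Type*} [Fintype X] [DecidableEq X]
    (p : X → X → Finset X → Finset X → ℝ)
    (hnn : ∀ (A B : Finset X), ∀ x ∈ A, ∀ y ∈ B, 0 ≤ p x y A B)
    (hsum : ∀ (A B : Finset X), A.Nonempty → B.Nonempty →
      ∑ x ∈ A, ∑ y ∈ B, p x y A B = 1)
    (hmarg : ∀ (A B C : Finset X), B.Nonempty → C.Nonempty → ∀ x ∈ A,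
      ∑ y ∈ B, p x y A B = ∑ y ∈ C, p x y A C)
    (hcsi : ∀ (B : Finset X), ∀ y ∈ B, ∀ (A A' : Finset X), ∀ x, x ∈ A → x ∈ A' →
      0 < ∑ w ∈ Finset.univ, p x w A Finset.univ →
      0 < ∑ w ∈ Finset.univ, p x w A' Finset.univ →
      p x y A B / (∑ w ∈ Finset.univ, p x w A Finset.univ) =
        p x y A' B / (∑ w ∈ Finset.univ, p x w A' Finset.univ)) :
    ∀ (B : Finset X), ∀ y ∈ B, ∀ (A A' : Finset X), ∀ x, x ∈ A → x ∈ A' →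
      0 < ∑ w ∈ Finset.univ, mob2 p x w A Finset.univ →
      0 < ∑ w ∈ Finset.univ, mob2 p x w A' Finset.univ →
      mob2 p x y A B / (∑ w ∈ Finset.univ, mob2 p x w A Finset.univ) =
        mob2 p x y A' B / (∑ w ∈ Finset.univ, mob2 p x w A' Finset.univ) := by
  intro B y hyB A A' x hxA hxA' hqA hqA'
  rw [mob2_eq_sum_mob2_univ_mul hnn hsum hmarg hcsi hxA hyB,
    mob2_eq_sum_mob2_univ_mul hnn hsum hmarg hcsi hxA' hyB,
    mul_div_cancel_left₀ _ hqA.ne', mul_div_cancel_left₀ _ hqA'.ne']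

/-- If `p` satisfies complete monotonicity, marginality, and choice set independence, then
the Möbius-inverse analogue of choice set independence holds:
`q(x,y,A,B)/q(x,A) = q(x,y,A',B)/q(x,A')` whenever `q(x,A), q(x,A') > 0`, where
`p(x,A) := Σ_{y∈X} p(x,y,A,X)` and `q(x,A) := Σ_{y∈X} q(x,y,A,X)`. -/
theorem stmt10 {X : Type*} [Fintype X] [DecidableEq X]
    (p : X → X → Finset X → Finset X → ℝ)
    (hnn : ∀ (A B : Finset X), ∀ x ∈ A, ∀ y ∈ B, 0 ≤ p x y A B)
    (hsum : ∀ (A B : Finset X), A.Nonempty → B.Nonempty →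
      ∑ x ∈ A, ∑ y ∈ B, p x y A B = 1)
    (hcm : ∀ (A B : Finset X), ∀ x ∈ A, ∀ y ∈ B, 0 ≤ mob2 p x y A B)
    (hmarg : ∀ (A B C : Finset X), B.Nonempty → C.Nonempty → ∀ x ∈ A,
      ∑ y ∈ B, p x y A B = ∑ y ∈ C, p x y A C)
    (hcsi : ∀ (B : Finset X), ∀ y ∈ B, ∀ (A A' : Finset X), ∀ x, x ∈ A → x ∈ A' →
      0 < ∑ w ∈ Finset.univ, p x w A Finset.univ →
      0 < ∑ w ∈ Finset.univ, p x w A' Finset.univ →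
      p x y A B / (∑ w ∈ Finset.univ, p x w A Finset.univ) =
        p x y A' B / (∑ w ∈ Finset.univ, p x w A' Finset.univ)) :
    ∀ (B : Finset X), ∀ y ∈ B, ∀ (A A' : Finset X), ∀ x, x ∈ A → x ∈ A' →
      0 < ∑ w ∈ Finset.univ, mob2 p x w A Finset.univ →
      0 < ∑ w ∈ Finset.univ, mob2 p x w A' Finset.univ →
      mob2 p x y A B / (∑ w ∈ Finset.univ, mob2 p x w A Finset.univ) =
        mob2 p x y A' B / (∑ w ∈ Finset.univ, mob2 p x w A' Finset.univ) :=
  stmt10_general p hnn hsum hmarg hcsi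
end

section
/- In the habit formation logit model with an outside option o satisfying v_o = 0 and c_o = 0, the parameters are identified: for each x ∈ X, v_x = ln(p(x,X)/p(o,X)) and c_x = ln(p(x,X|x,X)/p(o,X|x,X)) − v_x. -/
open Finset Real

theorem log_logit_odds {ι : Type*} (w : ι → ℝ) {s : Finset ι} (hs : s.Nonempty) (x y : ι) :
    Real.log ((Real.exp (w x) / ∑ z ∈ s, Real.exp (w z)) /
      (Real.exp (w y) / ∑ z ∈ s, Real.exp (w z))) = w x - w y := by
  have hS : ∑ z ∈ s, Real.exp (w z) ≠ 0 :=
    (Finset.sum_pos (fun z _ => Real.exp_pos (w z)) hs).ne'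
  rw [div_div_div_cancel_right₀ hS, ← Real.exp_sub, Real.log_exp]

theorem stmt15_general {X : Type*} [Fintype X] [DecidableEq X] (o : X)
    (v c : X → ℝ) (hvo : v o = 0) (hco : c o = 0)
    (p1 : X → Finset X → ℝ) (p2 : X → Finset X → X → Finset X → ℝ)
    (hp1 : ∀ x A, p1 x A = Real.exp (v x) / ∑ y ∈ A, Real.exp (v y))
    (hp2 : ∀ y B x A, p2 y B x A =
      Real.exp (v y + if y = x then c y else 0) /
        ∑ z ∈ B, Real.exp (v z + if z = x then c z else 0)) :
    ∀ x : X,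
      v x = Real.log (p1 x Finset.univ / p1 o Finset.univ) ∧
      c x = Real.log (p2 x Finset.univ x Finset.univ /
          p2 o Finset.univ x Finset.univ) - v x := by
  intro x
  have hX : (Finset.univ : Finset X).Nonempty := ⟨x, Finset.mem_univ x⟩
  constructor
  · rw [hp1, hp1, log_logit_odds v hX, hvo, sub_zero]
  · rw [hp2, hp2, log_logit_odds (fun z => v z + if z = x then c z else 0) hX]
    have hco' : (if o = x then c o else 0) = 0 := by split_ifs <;> simp [hco]
    rw [if_pos rfl, hco', hvo]
    ring

/-- Identification in the habit formation logit model: with the outside-option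
normalization `v_o = 0`, `c_o = 0`, the parameters are recovered as
`v_x = ln(p(x,X)/p(o,X))` and `c_x = ln(p(x,X|x,X)/p(o,X|x,X)) − v_x`. -/
theorem stmt15 {X : Type*} [Fintype X] [DecidableEq X] (o : X)
    (v c : X → ℝ) (hc : ∀ x, 0 ≤ c x) (hvo : v o = 0) (hco : c o = 0)
    (p1 : X → Finset X → ℝ) (p2 : X → Finset X → X → Finset X → ℝ)
    (hp1 : ∀ x A, p1 x A = Real.exp (v x) / ∑ y ∈ A, Real.exp (v y))
    (hp2 : ∀ y B x A, p2 y B x A =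
      Real.exp (v y + if y = x then c y else 0) /
        ∑ z ∈ B, Real.exp (v z + if z = x then c z else 0)) :
    ∀ x : X,
      v x = Real.log (p1 x Finset.univ / p1 o Finset.univ) ∧
      c x = Real.log (p2 x Finset.univ x Finset.univ /
          p2 o Finset.univ x Finset.univ) - v x :=
  stmt15_general o v c hvo hco p1 p2 hp1 hp2
end

section
/- In the habit formation logit model, the probability vector p_s(x,X) = e^{v_x}(Σ_{y∈X} e^{v_y + c_y 𝟙{x=y}}) / Σ_{z∈X} e^{v_z}(Σ_{y∈X} e^{v_y + c_y 𝟙{z=y}}) is a stationary distribution of the Markov chain on X with transition probabilities P(x→w) = p(w,X|x,X) = e^{v_w + c_w 𝟙{w=x}} / Σ_{z∈X} e^{v_z + c_z 𝟙{z=x}}; that is, for all x, p_s(x,X) = Σ_{y∈X} p_s(y,X) P(y→x). -/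
/-! The chain is reversible: `p_s(y) P(y→x)` is proportional to `e^{v_x + v_y + c_x 𝟙{x=y}}`,
which is symmetric in `x` and `y`, and detailed balance implies stationarity. -/

open Finset Real

theorem sum_mul_eq_of_detailed_balance {R X : Type*} [CommSemiring R] [Fintype X]
    (p : X → R) (P : X → X → R) (hP : ∀ x, ∑ y, P x y = 1)
    (hbal : ∀ x y, p y * P y x = p x * P x y) (x : X) :
    ∑ y, p y * P y x = p x := by
  rw [Fintype.sum_congr _ _ (hbal x), ← mul_sum, hP, mul_one]

theorem sum_mul_eq_of_symmetric_weights {K X : Type*} [Field K] [Fintype X]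
    (f : X → K) (W : X → X → K) (hsymm : ∀ x y, f y * W y x = f x * W x y)
    (hrow : ∀ y, ∑ x, W y x ≠ 0) (D : K) (x : X) :
    ∑ y, f y * (∑ w, W y w) / D * (W y x / ∑ z, W y z) = f x * (∑ y, W x y) / D := by
  refine sum_mul_eq_of_detailed_balance (fun y => f y * (∑ w, W y w) / D)
    (fun y x => W y x / ∑ z, W y z) (fun y => by rw [← sum_div, div_self (hrow y)]) ?_ x
  intro a b
  have hcancel : ∀ a b, f a * (∑ w, W a w) / D * (W a b / ∑ z, W a z) = f a * W a b / D :=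
    fun a b => by field_simp [hrow a]
  rw [hcancel, hcancel, hsymm]

theorem exp_mul_exp_add_ite_comm {X : Type*} [DecidableEq X] (v c : X → ℝ) (x y : X) :
    exp (v y) * exp (v x + if y = x then c x else 0) =
      exp (v x) * exp (v y + if x = y then c y else 0) := by
  by_cases h : x = y
  · subst h; rfl
  · simp only [h, Ne.symm h, if_false, add_zero, mul_comm]

/-- The stationary distribution of the habit formation logit Markov chain: the vector
`p_s(x) = e^{v_x}(Σ_y e^{v_y + c_y 𝟙{x=y}}) / Σ_z e^{v_z}(Σ_y e^{v_y + c_y 𝟙{z=y}})`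
satisfies `p_s(x) = Σ_y p_s(y) · P(y→x)` where
`P(y→x) = e^{v_x + c_x 𝟙{x=y}} / Σ_z e^{v_z + c_z 𝟙{z=y}}`. -/
theorem stmt16 {X : Type*} [Fintype X] [DecidableEq X] (v c : X → ℝ) :
    ∀ x : X,
      (Real.exp (v x) * ∑ y, Real.exp (v y + if x = y then c y else 0)) /
          (∑ z, Real.exp (v z) * ∑ y, Real.exp (v y + if z = y then c y else 0)) =
        ∑ y,
          ((Real.exp (v y) * ∑ w, Real.exp (v w + if y = w then c w else 0)) /
              (∑ z, Real.exp (v z) * ∑ w, Real.exp (v w + if z = w then c w else 0))) *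
            (Real.exp (v x + if x = y then c x else 0) /
              ∑ z, Real.exp (v z + if z = y then c z else 0)) := by
  intro x
  -- the statement writes the indicator both as `𝟙{x=y}` and as `𝟙{y=x}`
  convert (sum_mul_eq_of_symmetric_weights (fun y => exp (v y))
    (fun y x => exp (v x + if y = x then c x else 0)) (exp_mul_exp_add_ite_comm v c)
    (fun y => ne_of_gt (sum_pos (fun _ _ => exp_pos _) ⟨y, mem_univ y⟩)) _ x).symm using 5
  all_goals simp only [eq_comm]
end

section
/- A two-period random joint choice rule p has a learning logit representation if and only if it has a consumption dependent logit representation (c_x ∈ ℝ unrestricted). Moreover, if p has a learning logit representation, then p has a habit formation logit representation (c_x ≥ 0 for all x) if and only if p(x,X|x,X) ≥ p(x,X) for all x ∈ X. -/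
open Finset Real

variable {X : Type*} [Fintype X] [DecidableEq X]

/-- `p` has a consumption dependent logit representation (`c x ∈ ℝ` unrestricted). -/
def HasCDLogit (p1 : X → Finset X → ℝ) (p2 : X → Finset X → X → Finset X → ℝ) : Prop :=
  ∃ v c : X → ℝ,
    (∀ (A : Finset X), ∀ x ∈ A, p1 x A = Real.exp (v x) / ∑ y ∈ A, Real.exp (v y)) ∧
    (∀ (B : Finset X), ∀ y ∈ B, ∀ (x : X) (A : Finset X),
      p2 y B x A = Real.exp (v y + if y = x then c y else 0) /
        ∑ z ∈ B, Real.exp (v z + if z = x then c z else 0))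

/-- `p` has a habit formation logit representation (`c x ≥ 0` for all `x`). -/
def HasHFLogit (p1 : X → Finset X → ℝ) (p2 : X → Finset X → X → Finset X → ℝ) : Prop :=
  ∃ v c : X → ℝ, (∀ x, 0 ≤ c x) ∧
    (∀ (A : Finset X), ∀ x ∈ A, p1 x A = Real.exp (v x) / ∑ y ∈ A, Real.exp (v y)) ∧
    (∀ (B : Finset X), ∀ y ∈ B, ∀ (x : X) (A : Finset X),
      p2 y B x A = Real.exp (v y + if y = x then c y else 0) /
        ∑ z ∈ B, Real.exp (v z + if z = x then c z else 0))

/-- `p` has a learning logit representation: expected utilities `E x` govern first-period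
choice, and after consuming `x` the realized utility `V x` replaces `E x`. -/
def HasLearningLogit (p1 : X → Finset X → ℝ)
    (p2 : X → Finset X → X → Finset X → ℝ) : Prop :=
  ∃ E V : X → ℝ,
    (∀ (A : Finset X), ∀ x ∈ A, p1 x A = Real.exp (E x) / ∑ y ∈ A, Real.exp (E y)) ∧
    (∀ (B : Finset X), ∀ y ∈ B, ∀ (x : X) (A : Finset X),
      p2 y B x A = Real.exp (if y = x then V y else E y) /
        ∑ z ∈ B, Real.exp (if z = x then V z else E z))

/-!
A learning logit representation `(E, V)` is the consumption dependent logit `(E, V - E)`, and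
conversely `(v, c)` is the learning logit `(v, v + c)`. For the habit part, write
`R = ∑_{z ≠ x} e^{v z}`: then `p(x,X) = e^{v x} / (e^{v x} + R)` and
`p(x,X|x,X) = e^{v x + c x} / (e^{v x + c x} + R)`, and `t ↦ t / (t + R)` is increasing, strictly
so when `R > 0`, i.e. when `X` has a second element. If `X` is a singleton every second-period
probability is `1` and `c = 0` represents `p`.
-/

lemma div_add_le_div_add {a b r : ℝ} (ha : 0 < a) (hr : 0 ≤ r) (hab : a ≤ b) :
    a / (a + r) ≤ b / (b + r) := by
  rw [div_le_div_iff₀ (by positivity) (by linarith)]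
  nlinarith

lemma le_of_div_add_le_div_add {a b r : ℝ} (ha : 0 < a) (hb : 0 < b) (hr : 0 < r)
    (h : a / (a + r) ≤ b / (b + r)) : a ≤ b := by
  rw [div_le_div_iff₀ (by positivity) (by positivity)] at h
  nlinarith

lemma exp_div_sum_exp_of_subsingleton {α : Type*} [Subsingleton α] {B : Finset α} {y : α}
    (hy : y ∈ B) (f : α → ℝ) : Real.exp (f y) / ∑ z ∈ B, Real.exp (f z) = 1 := by
  rw [Finset.eq_singleton_iff_unique_mem.2 ⟨hy, fun z _ => Subsingleton.elim z y⟩,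
    Finset.sum_singleton, div_self (Real.exp_ne_zero _)]

theorem hasLearningLogit_iff_hasCDLogit {α : Type*} [DecidableEq α] (p1 : α → Finset α → ℝ)
    (p2 : α → Finset α → α → Finset α → ℝ) :
    HasLearningLogit p1 p2 ↔ HasCDLogit p1 p2 := by
  constructor
  · rintro ⟨E, V, h1, h2⟩
    refine ⟨E, fun x => V x - E x, h1, ?_⟩
    simpa only [add_ite, add_zero, add_sub_cancel] using h2
  · rintro ⟨v, c, h1, h2⟩
    refine ⟨v, fun x => v x + c x, h1, ?_⟩
    simpa only [add_ite, add_zero] using h2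

section RepeatChoice

variable (v c : X → ℝ) (x : X)

lemma sum_exp_add_ite_eq :
    ∑ z, Real.exp (v z + if z = x then c z else 0) =
      Real.exp (v x + c x) + ∑ z ∈ univ.erase x, Real.exp (v z) := by
  rw [← Finset.add_sum_erase _ _ (mem_univ x), if_pos rfl]
  congr 1
  refine Finset.sum_congr rfl fun z hz => ?_
  rw [if_neg (mem_erase.1 hz).1, add_zero]

lemma exp_div_sum_exp_le_of_nonneg (hc : 0 ≤ c x) :
    Real.exp (v x) / ∑ y, Real.exp (v y) ≤
      Real.exp (v x + c x) / ∑ z, Real.exp (v z + if z = x then c z else 0) := by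
  rw [sum_exp_add_ite_eq, ← Finset.add_sum_erase _ _ (mem_univ x)]
  exact div_add_le_div_add (Real.exp_pos _) (sum_nonneg fun _ _ => (Real.exp_pos _).le)
    (Real.exp_le_exp.2 (by linarith))

lemma nonneg_of_exp_div_sum_exp_le [Nontrivial X]
    (h : Real.exp (v x) / ∑ y, Real.exp (v y) ≤
      Real.exp (v x + c x) / ∑ z, Real.exp (v z + if z = x then c z else 0)) :
    0 ≤ c x := by
  rw [sum_exp_add_ite_eq, ← Finset.add_sum_erase _ _ (mem_univ x)] at h
  obtain ⟨y, hyx⟩ := exists_ne x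
  have hrest : 0 < ∑ z ∈ univ.erase x, Real.exp (v z) :=
    sum_pos (fun _ _ => Real.exp_pos _) ⟨y, mem_erase.2 ⟨hyx, mem_univ y⟩⟩
  have := Real.exp_le_exp.1 (le_of_div_add_le_div_add (Real.exp_pos _) (Real.exp_pos _) hrest h)
  linarith

end RepeatChoice

/-- A two-period rjcr has a learning logit representation iff it has a consumption
dependent logit representation; and a learning logit rjcr has a habit formation logit
representation iff `p(x,X|x,X) ≥ p(x,X)` for all `x`. -/
theorem stmt17 (p1 : X → Finset X → ℝ) (p2 : X → Finset X → X → Finset X → ℝ) :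
    (HasLearningLogit p1 p2 ↔ HasCDLogit p1 p2) ∧
    (HasLearningLogit p1 p2 →
      (HasHFLogit p1 p2 ↔
        ∀ x : X, p1 x Finset.univ ≤ p2 x Finset.univ x Finset.univ)) := by
  refine ⟨hasLearningLogit_iff_hasCDLogit p1 p2, fun hL => ⟨?_, fun hrepeat => ?_⟩⟩
  · rintro ⟨v, c, hc, h1, h2⟩ x
    rw [h1 _ x (mem_univ x), h2 _ x (mem_univ x) x univ, if_pos rfl]
    exact exp_div_sum_exp_le_of_nonneg v c x (hc x)
  obtain ⟨v, c, h1, h2⟩ := (hasLearningLogit_iff_hasCDLogit p1 p2).1 hL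
  rcases subsingleton_or_nontrivial X with hX | hX
  · refine ⟨v, fun _ => 0, fun _ => le_rfl, h1, fun B y hy x A => ?_⟩
    rw [h2 B y hy x A, exp_div_sum_exp_of_subsingleton hy (fun z => v z + if z = x then c z else 0),
      exp_div_sum_exp_of_subsingleton hy (fun z => v z + if z = x then (0 : ℝ) else 0)]
  · refine ⟨v, c, fun x => nonneg_of_exp_div_sum_exp_le v c x ?_, h1, h2⟩
    have := hrepeat x
    rwa [h1 _ x (mem_univ x), h2 _ x (mem_univ x) x univ, if_pos rfl] at this
end

section
/- Consider the directed graph on the power set of a finite set X with an edge from B to B\{y} for each y ∈ B, with nonnegative edge capacities q(y,B), satisfying flow conservation at every node A with ∅ ⊊ A ⊊ X (Σ_{x∈A} q(x,A) = Σ_{z∉A} q(z,A∪{z})) and total outflow from X equal to 1 (Σ_{x∈X} q(x,X) = 1). Then there exists a probability distribution ν over maximal chains X = A₀ ⊋ A₁ ⊋ … ⊋ A_{|X|} = ∅ (equivalently, linear orders of X) such that each edge capacity q(y,B) equals the total ν-probability of chains using the edge from B to B\{y}. -/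
/-!
A flow of positive value contains a maximal chain all of whose edges carry positive flow: going
down from `X`, conservation gives every node reached through a positive edge a positive outflow.
Subtracting the unit flow of that chain, scaled by its bottleneck capacity, leaves a flow whose
support is strictly smaller, so induction on the support decomposes every flow into chain flows.
A flow of value zero vanishes, since by conservation the outflow of a node is bounded by the
outflows of the nodes above it.
-/

open Finset

theorem List.Nodup.mem_drop_iff_le_idxOf {α : Type*} [DecidableEq α] {l : List α} (hl : l.Nodup)
    {a : α} (ha : a ∈ l) {n : ℕ} : a ∈ l.drop n ↔ n ≤ l.idxOf a := by
  rw [← not_lt, ← List.mem_take_iff_idxOf_lt ha]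
  refine ⟨fun hd ht => List.disjoint_take_drop hl le_rfl ht hd, fun ht => ?_⟩
  rw [← List.take_append_drop n l] at ha
  exact (List.mem_append.1 ha).resolve_left ht

namespace BooleanFlow

variable {X : Type*} [Fintype X]

def removalSet (σ : X ≃ Fin (Fintype.card X)) (y : X) : Finset X :=
  univ.filter fun z => σ y ≤ σ z

def chainFlow [DecidableEq X] (σ : X ≃ Fin (Fintype.card X)) (y : X) (B : Finset X) : ℝ :=
  if B = removalSet σ y then 1 else 0

variable {σ : X ≃ Fin (Fintype.card X)}

@[simp]
theorem mem_removalSet {y z : X} : z ∈ removalSet σ y ↔ σ y ≤ σ z := by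
  simp [removalSet]

theorem self_mem_removalSet (y : X) : y ∈ removalSet σ y :=
  mem_removalSet.2 le_rfl

theorem removalSet_injective : Function.Injective (removalSet σ) := fun x x' h =>
  σ.injective <| le_antisymm (mem_removalSet.1 (h ▸ self_mem_removalSet x'))
    (mem_removalSet.1 (h ▸ self_mem_removalSet x))

variable [DecidableEq X]

theorem exists_mem_eq_removalSet_iff {A : Finset X} (hA : A.Nonempty) (hA' : A ≠ univ) :
    (∃ x ∈ A, A = removalSet σ x) ↔ ∃ z ∈ Aᶜ, insert z A = removalSet σ z := by
  constructor
  · rintro ⟨x, -, rfl⟩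
    obtain ⟨z, hz, hmax⟩ := (removalSet σ x)ᶜ.exists_max_image σ
      (nonempty_iff_ne_empty.2 ((compl_eq_empty_iff _).not.2 hA'))
    refine ⟨z, hz, ext fun w => ?_⟩
    simp only [mem_compl, mem_removalSet, not_le, mem_insert] at hz hmax ⊢
    refine ⟨?_, fun hw => ?_⟩
    · rintro (rfl | hw)
      exacts [le_rfl, (hz.trans_le hw).le]
    · by_contra! h
      exact h.1 (σ.injective (le_antisymm (hmax w h.2) hw))
  · rintro ⟨z, hz, h⟩
    obtain ⟨x, hx, hmin⟩ := A.exists_min_image σ hA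
    refine ⟨x, hx, ext fun w => ⟨fun hw => mem_removalSet.2 (hmin w hw), fun hw => ?_⟩⟩
    have hzx : σ z < σ x := lt_of_le_of_ne (mem_removalSet.1 (h ▸ mem_insert_of_mem hx))
      (σ.injective.ne fun e => mem_compl.1 hz (e ▸ hx))
    have hwz : w ≠ z := fun e => (e ▸ hzx).not_ge (mem_removalSet.1 hw)
    have : w ∈ insert z A := h ▸ mem_removalSet.2 (hzx.trans_le (mem_removalSet.1 hw)).le
    exact (mem_insert.1 this).resolve_left hwz

theorem sum_chainFlow (A : Finset X) :
    ∑ x ∈ A, chainFlow σ x A = if ∃ x ∈ A, A = removalSet σ x then 1 else 0 :=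
  sum_ite_zero _ _ (fun _ _ _ _ hx hx' => removalSet_injective (hx.symm.trans hx')) 1

theorem sum_chainFlow_univ [Nonempty X] :
    ∑ x, chainFlow σ x univ = 1 := by
  rw [sum_chainFlow, if_pos]
  refine ⟨σ.symm ⟨0, Fintype.card_pos⟩, mem_univ _, (eq_univ_of_forall fun z => ?_).symm⟩
  simp

theorem chainFlow_conservation {A : Finset X} (hA : A.Nonempty)
    (hA' : A ≠ univ) : ∑ x ∈ A, chainFlow σ x A = ∑ z ∈ Aᶜ, chainFlow σ z (insert z A) := by
  have inflow_unique : ∀ z ∈ Aᶜ, ∀ z' ∈ Aᶜ, insert z A = removalSet σ z →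
      insert z' A = removalSet σ z' → z = z' := by
    intro z hz z' hz' h h'
    wlog hle : σ z ≤ σ z' generalizing z z'
    · exact (this z' hz' z hz h' h (le_of_not_ge hle)).symm
    have : z' ∈ insert z A := h ▸ mem_removalSet.2 hle
    exact ((mem_insert.1 this).resolve_right (mem_compl.1 hz')).symm
  rw [sum_chainFlow]
  unfold chainFlow
  rw [sum_ite_zero _ _ inflow_unique]
  exact if_congr (exists_mem_eq_removalSet_iff hA hA') rfl rfl

structure IsFlow (q : X → Finset X → ℝ) : Prop where
  nonneg : ∀ B : Finset X, ∀ y ∈ B, 0 ≤ q y B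
  conservation : ∀ A : Finset X, A.Nonempty → A ≠ univ →
    ∑ x ∈ A, q x A = ∑ z ∈ Aᶜ, q z (insert z A)

namespace IsFlow

variable {q : X → Finset X → ℝ}

theorem sub_smul_chainFlow (hq : IsFlow q) {t : ℝ}
    (ht : ∀ y, t ≤ q y (removalSet σ y)) : IsFlow (q - t • chainFlow σ) where
  nonneg B y hy := by
    simp only [Pi.sub_apply, Pi.smul_apply, smul_eq_mul, chainFlow]
    split_ifs with hB
    · simpa [hB] using ht y
    · simpa using hq.nonneg B y hy
  conservation A hA hA' := by
    simp only [Pi.sub_apply, Pi.smul_apply, smul_eq_mul, sum_sub_distrib, ← mul_sum]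
    rw [hq.conservation A hA hA', chainFlow_conservation hA hA']

theorem sum_eq_zero_of_sum_univ_eq_zero (hq : IsFlow q) (h : ∑ x, q x univ = 0) (B : Finset X) :
    ∑ x ∈ B, q x B = 0 := by
  refine strongDownwardInduction (p := fun B => ∑ x ∈ B, q x B = 0) (fun B ih _ => ?_) B
    (card_le_univ B)
  rcases B.eq_empty_or_nonempty with rfl | hB
  · exact sum_empty
  rcases eq_or_ne B univ with rfl | hB'
  · exact h
  rw [hq.conservation B hB hB']
  refine sum_eq_zero fun z hz => le_antisymm ?_ (hq.nonneg _ z (mem_insert_self z B))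
  calc q z (insert z B) ≤ ∑ x ∈ insert z B, q x (insert z B) :=
        single_le_sum (fun x hx => hq.nonneg _ x hx) (mem_insert_self z B)
    _ = 0 := ih (card_le_univ _) (ssubset_insert (mem_compl.1 hz))

theorem sum_erase_pos (hq : IsFlow q) {B : Finset X} {y : X} (hy : y ∈ B)
    (hB : (B.erase y).Nonempty) (hqy : 0 < q y B) : 0 < ∑ x ∈ B.erase y, q x (B.erase y) := by
  have hy' : y ∈ (B.erase y)ᶜ := mem_compl.2 (notMem_erase y B)
  rw [hq.conservation _ hB fun h => notMem_erase y B (h ▸ mem_univ y)]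
  calc 0 < q y (insert y (B.erase y)) := by rwa [insert_erase hy]
    _ ≤ ∑ z ∈ (B.erase y)ᶜ, q z (insert z (B.erase y)) :=
      single_le_sum (fun z _ => hq.nonneg _ z (mem_insert_self z (B.erase y))) hy'

theorem exists_pos_path (hq : IsFlow q) (B : Finset X) (hB : 0 < ∑ y ∈ B, q y B) :
    ∃ l : List X, l.Nodup ∧ l.toFinset = B ∧
      ∀ (i : ℕ) (hi : i < l.length), 0 < q l[i] (l.drop i).toFinset := by
  induction B using Finset.strongInduction with
  | H B ih =>
  obtain ⟨y, hyB, hy⟩ := exists_lt_of_sum_lt (f := 0) (g := fun y => q y B) (by simpa using hB)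
  obtain ⟨l, hl, hlB, hlq⟩ : ∃ l : List X, l.Nodup ∧ l.toFinset = B.erase y ∧
      ∀ (i : ℕ) (hi : i < l.length), 0 < q l[i] (l.drop i).toFinset := by
    rcases (B.erase y).eq_empty_or_nonempty with hB' | hB'
    · exact ⟨[], List.nodup_nil, hB'.symm, by simp⟩
    · exact ih _ (erase_ssubset hyB) (hq.sum_erase_pos hyB hB' hy)
  have hyl : y ∉ l := fun h => notMem_erase y B (hlB ▸ List.mem_toFinset.2 h)
  have hlB' : (y :: l).toFinset = B := by rw [List.toFinset_cons, hlB, insert_erase hyB]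
  refine ⟨y :: l, List.nodup_cons.2 ⟨hyl, hl⟩, hlB', fun i hi => ?_⟩
  cases i with
  | zero => simpa [hlB'] using hy
  | succ i => simpa using hlq i (by simpa using hi)

theorem exists_pos_chain (hq : IsFlow q) (h : 0 < ∑ x, q x univ) :
    ∃ σ : X ≃ Fin (Fintype.card X), ∀ y, 0 < q y (removalSet σ y) := by
  obtain ⟨l, hl, hlX, hlq⟩ := hq.exists_pos_path univ h
  have hmem : ∀ x, x ∈ l := fun x => List.mem_toFinset.1 (hlX ▸ mem_univ x)
  have hlen : l.length = Fintype.card X := by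
    rw [← List.toFinset_card_of_nodup hl, hlX, card_univ]
  let σ := (hl.getEquivOfForallMemList l hmem).symm.trans (finCongr hlen)
  have hσ : ∀ x, (σ x : ℕ) = l.idxOf x := fun x => by simp [σ]
  refine ⟨σ, fun y => ?_⟩
  have hidx := List.idxOf_lt_length_iff.2 (hmem y)
  convert hlq _ hidx using 2
  · exact (List.getElem_idxOf hidx).symm
  · ext z
    rw [mem_removalSet, Fin.le_def, hσ, hσ, List.mem_toFinset, hl.mem_drop_iff_le_idxOf (hmem z)]

end IsFlow

def edgeSupport (q : X → Finset X → ℝ) : Set (X × Finset X) :=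
  {e | e.1 ∈ e.2 ∧ q e.1 e.2 ≠ 0}

theorem edgeSupport_sub_smul_chainFlow_ssubset {q : X → Finset X → ℝ}
    (hσ : ∀ y, 0 < q y (removalSet σ y)) (y₀ : X) :
    edgeSupport (q - q y₀ (removalSet σ y₀) • chainFlow σ) ⊂ edgeSupport q := by
  refine (Set.ssubset_iff_of_subset ?_).2
    ⟨(y₀, removalSet σ y₀), ⟨self_mem_removalSet y₀, (hσ y₀).ne'⟩, ?_⟩
  · rintro ⟨y, B⟩ ⟨hy, hqy⟩
    refine ⟨hy, fun h0 => hqy ?_⟩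
    by_cases hB : B = removalSet σ y
    · exact absurd (hB ▸ h0) (hσ y).ne'
    · simp [chainFlow, hB, h0]
  · simp [edgeSupport, chainFlow]

theorem IsFlow.exists_decomposition {q : X → Finset X → ℝ} (hq : IsFlow q) :
    ∃ ν : (X ≃ Fin (Fintype.card X)) → ℝ, (∀ σ, 0 ≤ ν σ) ∧ ∑ σ, ν σ = ∑ x, q x univ ∧
      ∀ B, ∀ y ∈ B, q y B = ∑ σ ∈ univ.filter (fun σ => B = removalSet σ y), ν σ := by
  induction hN : (edgeSupport q).ncard using Nat.strong_induction_on generalizing q with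
  | _ N ih =>
  have hout : 0 ≤ ∑ x, q x univ := sum_nonneg fun x _ => hq.nonneg univ x (mem_univ x)
  rcases hout.eq_or_lt with h0 | hpos
  · refine ⟨0, fun _ => le_rfl, by simp [← h0], fun B y hy => ?_⟩
    have := (sum_eq_zero_iff_of_nonneg (hq.nonneg B)).1
      (hq.sum_eq_zero_of_sum_univ_eq_zero h0.symm B) y hy
    simpa using this
  obtain ⟨σ, hσ⟩ := hq.exists_pos_chain hpos
  obtain ⟨y₀, -, hy₀⟩ := univ.exists_min_image (fun y => q y (removalSet σ y))
    (nonempty_of_sum_ne_zero hpos.ne')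
  have : Nonempty X := ⟨y₀⟩
  set t := q y₀ (removalSet σ y₀)
  obtain ⟨ν, hν, hνsum, hνq⟩ := ih _
    (hN ▸ Set.ncard_lt_ncard (edgeSupport_sub_smul_chainFlow_ssubset hσ y₀))
    (hq.sub_smul_chainFlow fun y => hy₀ y (mem_univ y)) rfl
  refine ⟨ν + Pi.single σ t, fun τ => add_nonneg (hν τ) ?_, ?_, fun B y hy => ?_⟩
  · exact (Pi.single_nonneg (α := fun _ => ℝ)).2 (hσ y₀).le τ
  · simp [sum_add_distrib, hνsum, sum_sub_distrib, ← mul_sum, sum_chainFlow_univ]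
  · have hq'y := hνq B y hy
    simp only [Pi.sub_apply, Pi.smul_apply, smul_eq_mul, chainFlow, mul_ite, mul_one, mul_zero]
      at hq'y
    simp only [Pi.add_apply, sum_add_distrib, sum_pi_single', mem_filter, mem_univ, true_and,
      ← hq'y, sub_add_cancel]

end BooleanFlow

theorem stmt18_general {X : Type*} [Fintype X] [DecidableEq X]
    (q : X → Finset X → ℝ)
    (hnn : ∀ (B : Finset X), ∀ y ∈ B, 0 ≤ q y B)
    (hcons : ∀ A : Finset X, A.Nonempty → A ≠ Finset.univ →
      ∑ x ∈ A, q x A = ∑ z ∈ Aᶜ, q z (insert z A))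
    (hout : ∑ x, q x Finset.univ = 1) :
    ∃ ν : (X ≃ Fin (Fintype.card X)) → ℝ,
      (∀ σ, 0 ≤ ν σ) ∧ (∑ σ, ν σ = 1) ∧
      ∀ (B : Finset X), ∀ y ∈ B,
        q y B =
          ∑ σ ∈ Finset.univ.filter
              (fun σ : X ≃ Fin (Fintype.card X) =>
                B = Finset.univ.filter (fun z => σ y ≤ σ z)),
            ν σ := by
  obtain ⟨ν, hν, hνsum, hνq⟩ := BooleanFlow.IsFlow.exists_decomposition ⟨hnn, hcons⟩
  exact ⟨ν, hν, hνsum.trans hout, hνq⟩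

/-- Flow decomposition on the Boolean lattice (Falmagne): nonnegative edge capacities
`q(y,B)` (edge from `B` to `B \ {y}`) satisfying flow conservation at interior nodes and
unit outflow from `X` decompose as a mixture of unit flows along maximal chains,
bijectively encoded by linear orders `σ : X ≃ Fin |X|` (smaller rank removed first); the
chain of `σ` uses the edge `(y,B)` iff `B = {z : σ y ≤ σ z}`. -/
theorem stmt18 {X : Type*} [Fintype X] [DecidableEq X] [Nonempty X]
    (q : X → Finset X → ℝ)
    (hnn : ∀ (B : Finset X), ∀ y ∈ B, 0 ≤ q y B)
    (hcons : ∀ A : Finset X, A.Nonempty → A ≠ Finset.univ →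
      ∑ x ∈ A, q x A = ∑ z ∈ Aᶜ, q z (insert z A))
    (hout : ∑ x, q x Finset.univ = 1) :
    ∃ ν : (X ≃ Fin (Fintype.card X)) → ℝ,
      (∀ σ, 0 ≤ ν σ) ∧ (∑ σ, ν σ = 1) ∧
      ∀ (B : Finset X), ∀ y ∈ B,
        q y B =
          ∑ σ ∈ Finset.univ.filter
              (fun σ : X ≃ Fin (Fintype.card X) =>
                B = Finset.univ.filter (fun z => σ y ≤ σ z)),
            ν σ :=
  stmt18_general q hnn hcons hout
end
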